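/- Let p be an odd prime number and n a positive integer. Define f_{2ⁿ}(p) = min{ f ∈ ℤ_{≥1} : p^f ≡ ±1 (mod 2ⁿ) }. Then f_{2ⁿ}(p) = 1 if n < ν₂(p² − 1), and f_{2ⁿ}(p) = 2^{n − ν₂(p² − 1) + 1} if n ≥ ν₂(p² − 1). -/

import Mathlib

/-!
Write `v = ν₂(p² - 1)`. Since `p ^ f - 1` and `p ^ f + 1` differ by `2`, one of them has
2-adic valuation exactly `1`, so `p ^ f ≡ ±1 (mod 2ⁿ)` holds iff the other one carries
`n ≤ ν₂(p ^ (2f) - 1) - 1` factors of `2`. By lifting the exponent, `ν₂(p ^ (2f) - 1) = v + ν₂(f)`,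
so the admissible exponents are exactly the multiples of `2 ^ (n + 1 - v)`.
-/

lemma ZMod.natCast_eq_one_iff_dvd_sub_one {m y : ℕ} (hy : 1 ≤ y) :
    (y : ZMod m) = 1 ↔ m ∣ y - 1 := by
  rw [← ZMod.natCast_eq_zero_iff, Nat.cast_sub hy, Nat.cast_one, sub_eq_zero]

lemma ZMod.natCast_eq_neg_one_iff_dvd_add_one {m y : ℕ} :
    (y : ZMod m) = -1 ↔ m ∣ y + 1 := by
  rw [← ZMod.natCast_eq_zero_iff, Nat.cast_add, Nat.cast_one, eq_neg_iff_add_eq_zero]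

lemma Nat.sInf_setOf_pos_and_le_padicValNat {p : ℕ} [Fact p.Prime] (k : ℕ) :
    sInf {f : ℕ | 0 < f ∧ k ≤ padicValNat p f} = p ^ k := by
  have hdvd : ∀ f, 0 < f → (k ≤ padicValNat p f ↔ p ^ k ∣ f) := fun f hf =>
    (padicValNat_dvd_iff_le hf.ne').symm
  have hmem : p ^ k ∈ {f : ℕ | 0 < f ∧ k ≤ padicValNat p f} := by
    have hpos : 0 < p ^ k := pow_pos (Fact.out : p.Prime).pos k
    exact ⟨hpos, (hdvd _ hpos).2 dvd_rfl⟩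
  refine le_antisymm (Nat.sInf_le hmem) ?_
  obtain ⟨hpos, hle⟩ := Nat.sInf_mem ⟨_, hmem⟩
  exact Nat.le_of_dvd hpos ((hdvd _ hpos).1 hle)

section TwoAdic

variable {x : ℕ}

/-- Since `(x + 1) - (x - 1) = 2`, one of the two valuations is `1`, so their maximum is
`ν₂(x² - 1) - 1`. -/
lemma two_pow_dvd_sub_one_or_add_one_iff (h1x : 1 < x) (hx : Odd x) (n : ℕ) :
    2 ^ n ∣ x - 1 ∨ 2 ^ n ∣ x + 1 ↔ n + 1 ≤ padicValNat 2 (x ^ 2 - 1) := by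
  have hx2 : ¬2 ∣ x := hx.not_two_dvd_nat
  have hsq := padicValNat.pow_two_sub_one h1x hx2 two_ne_zero even_two
  have hsub : 1 ≤ padicValNat 2 (x - 1) :=
    one_le_padicValNat_of_dvd (by omega) (by omega)
  have hadd : 1 ≤ padicValNat 2 (x + 1) :=
    one_le_padicValNat_of_dvd (by omega) (by omega)
  have hmin : padicValNat 2 (x - 1) = 1 ∨ padicValNat 2 (x + 1) = 1 := by
    by_contra! h
    have h4sub : 2 ^ 2 ∣ x - 1 := (padicValNat_dvd_iff_le (by omega)).2 (by omega)
    have h4add : 2 ^ 2 ∣ x + 1 := (padicValNat_dvd_iff_le (by omega)).2 (by omega)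
    omega
  rw [padicValNat_dvd_iff_le (by omega), padicValNat_dvd_iff_le (by omega)]
  simp only [padicValNat_self] at hsq
  omega

lemma padicValNat_pow_sq_sub_one (h1x : 1 < x) (hx : Odd x) {f : ℕ} (hf : f ≠ 0) :
    padicValNat 2 ((x ^ f) ^ 2 - 1) = padicValNat 2 (x ^ 2 - 1) + padicValNat 2 f := by
  have hx2 : ¬2 ∣ x := hx.not_two_dvd_nat
  have h2f := padicValNat.pow_two_sub_one h1x hx2 (by omega : 2 * f ≠ 0) (even_two_mul f)
  have h2 := padicValNat.pow_two_sub_one h1x hx2 two_ne_zero even_two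
  rw [← pow_mul, mul_comm f 2]
  rw [padicValNat.mul two_ne_zero hf] at h2f
  simp only [padicValNat_self] at h2f h2
  omega

lemma natCast_pow_eq_one_or_neg_one_iff (h1x : 1 < x) (hx : Odd x) (n : ℕ) {f : ℕ}
    (hf : f ≠ 0) :
    ((x : ZMod (2 ^ n)) ^ f = 1 ∨ (x : ZMod (2 ^ n)) ^ f = -1) ↔
      n + 1 ≤ padicValNat 2 (x ^ 2 - 1) + padicValNat 2 f := by
  have h1xf : 1 < x ^ f := Nat.one_lt_pow hf h1x
  rw [← Nat.cast_pow, ZMod.natCast_eq_one_iff_dvd_sub_one h1xf.le,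
    ZMod.natCast_eq_neg_one_iff_dvd_add_one,
    two_pow_dvd_sub_one_or_add_one_iff h1xf hx.pow n, padicValNat_pow_sq_sub_one h1x hx hf]

end TwoAdic

theorem min_pow_pm_one_mod_two_pow_general (p : ℕ) (hp : p.Prime) (hodd : Odd p) (n : ℕ) :
    (n < padicValNat 2 (p ^ 2 - 1) →
      sInf {f : ℕ | 0 < f ∧ ((p : ZMod (2 ^ n)) ^ f = 1 ∨ (p : ZMod (2 ^ n)) ^ f = -1)} = 1) ∧
    (padicValNat 2 (p ^ 2 - 1) ≤ n →
      sInf {f : ℕ | 0 < f ∧ ((p : ZMod (2 ^ n)) ^ f = 1 ∨ (p : ZMod (2 ^ n)) ^ f = -1)} =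
        2 ^ (n - padicValNat 2 (p ^ 2 - 1) + 1)) := by
  set v := padicValNat 2 (p ^ 2 - 1)
  have hset : {f : ℕ | 0 < f ∧ ((p : ZMod (2 ^ n)) ^ f = 1 ∨ (p : ZMod (2 ^ n)) ^ f = -1)} =
      {f : ℕ | 0 < f ∧ n + 1 - v ≤ padicValNat 2 f} := by
    ext f
    simp only [Set.mem_ofPred_eq, and_congr_right_iff]
    intro hf
    rw [natCast_pow_eq_one_or_neg_one_iff hp.one_lt hodd n hf.ne']
    omega
  rw [hset, Nat.sInf_setOf_pos_and_le_padicValNat]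
  constructor
  · intro hlt
    rw [Nat.sub_eq_zero_of_le hlt, pow_zero]
  · intro hle
    rw [Nat.sub_add_comm hle]

/-- For an odd prime `p` and `n ≥ 1`, let `f_{2ⁿ}(p) = min {f ≥ 1 : p^f ≡ ±1 (mod 2ⁿ)}`.
Then `f_{2ⁿ}(p) = 1` if `n < ν₂(p² - 1)`, and `f_{2ⁿ}(p) = 2^(n - ν₂(p²-1) + 1)` if
`n ≥ ν₂(p² - 1)`. -/
theorem min_pow_pm_one_mod_two_pow (p : ℕ) (hp : p.Prime) (hodd : Odd p) (n : ℕ) (hn : 0 < n) :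
    (n < padicValNat 2 (p ^ 2 - 1) →
      sInf {f : ℕ | 0 < f ∧ ((p : ZMod (2 ^ n)) ^ f = 1 ∨ (p : ZMod (2 ^ n)) ^ f = -1)} = 1) ∧
    (padicValNat 2 (p ^ 2 - 1) ≤ n →
      sInf {f : ℕ | 0 < f ∧ ((p : ZMod (2 ^ n)) ^ f = 1 ∨ (p : ZMod (2 ^ n)) ^ f = -1)} =
        2 ^ (n - padicValNat 2 (p ^ 2 - 1) + 1)) :=
  min_pow_pm_one_mod_two_pow_general p hp hodd n
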